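/- Let Σ be a bipartite graph with classes E and O, let χ be a proper 3-coloring of Σ with I = χ^{-1}(0), and let W ⊆ V(Σ) satisfy: ∂_int W ⊆ O, ∂_ext W ⊆ E, and (∂_int W ∪ ∂_ext W) ∩ I = ∅. Then on every connected component U of the subgraph induced by ∂_int W ∪ ∂_ext W, χ is constant on U ∩ ∂_int W and constant on U ∩ ∂_ext W, with these two constants being 1 and 2 in some order. -/
import Mathlib


/-- Internal vertex boundary of `W`: vertices of `W` adjacent to a vertex
outside `W`. -/
def intBdry {V : Type*} (G : SimpleGraph V) (W : Set V) : Set V :=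
  {x | x ∈ W ∧ ∃ y, y ∉ W ∧ G.Adj x y}

/-- External vertex boundary of `W`: vertices outside `W` adjacent to a
vertex of `W`. -/
def extBdry {V : Type*} (G : SimpleGraph V) (W : Set V) : Set V :=
  {y | y ∉ W ∧ ∃ x, x ∈ W ∧ G.Adj y x}

private lemma fin3_neg_of_ne (a b : Fin 3) (ha : a ≠ 0) (hb : b ≠ 0) (hab : a ≠ b) :
    a = -b := by revert a b; decide

private lemma fin3_ne_zero_cases (a : Fin 3) (h : a ≠ 0) : a = 1 ∨ a = 2 := by
  revert a; decide

/-- Let `Σ` be a bipartite graph with classes `EV` and `OV`, `χ` a proper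
3-coloring with `I = χ⁻¹(0)`, and `W` a set of vertices with
`∂_int W ⊆ OV`, `∂_ext W ⊆ EV` and `(∂_int W ∪ ∂_ext W) ∩ I = ∅`. Then on
every connected component `U` of the subgraph induced on
`∂_int W ∪ ∂_ext W`, `χ` is constant on `U ∩ ∂_int W` and constant on
`U ∩ ∂_ext W`, these two constants being `1` and `2` in some order. -/
theorem coloring_constant_on_boundary_components {V : Type*}
    (G : SimpleGraph V) (EV OV : Set V) (hdisj : Disjoint EV OV)
    (hcover : EV ∪ OV = Set.univ)
    (hbip : ∀ u v, G.Adj u v → (u ∈ EV ∧ v ∈ OV) ∨ (u ∈ OV ∧ v ∈ EV))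
    (χ : V → Fin 3) (hχ : ∀ u v, G.Adj u v → χ u ≠ χ v)
    (W : Set V) (hint : intBdry G W ⊆ OV) (hext : extBdry G W ⊆ EV)
    (hfree : (intBdry G W ∪ extBdry G W) ∩ {v | χ v = 0} = ∅) :
    ∀ c : (G.induce (intBdry G W ∪ extBdry G W)).ConnectedComponent,
      ∃ a b : Fin 3, ({a, b} : Set (Fin 3)) = {1, 2} ∧
        ∀ v : (intBdry G W ∪ extBdry G W : Set V),
          (G.induce (intBdry G W ∪ extBdry G W)).connectedComponentMk v = c →
            (v.1 ∈ intBdry G W → χ v.1 = a) ∧ (v.1 ∈ extBdry G W → χ v.1 = b) := by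
  classical
  set S : Set V := intBdry G W ∪ extBdry G W with hS
  -- no vertex in S has color 0
  have hne0 : ∀ v ∈ S, χ v ≠ 0 := by
    intro v hv h0
    have : v ∈ S ∩ {v | χ v = 0} := ⟨hv, h0⟩
    rw [hfree] at this
    exact this
  -- intBdry and extBdry are disjoint
  have hdisj' : ∀ v, v ∈ intBdry G W → v ∈ extBdry G W → False := by
    intro v h1 h2
    exact hdisj.ne_of_mem (hext h2) (hint h1) rfl
  -- auxiliary function constant on components
  let g : S → Fin 3 := fun v => if v.1 ∈ intBdry G W then χ v.1 else -χ v.1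
  have hadj : ∀ u v : S, (G.induce S).Adj u v → g u = g v := by
    intro u v huv
    have hAdj : G.Adj u.1 v.1 := huv
    have hneq : χ u.1 ≠ χ v.1 := hχ _ _ hAdj
    have hu0 := hne0 _ u.2
    have hv0 := hne0 _ v.2
    have hswap : χ u.1 = -χ v.1 := fin3_neg_of_ne _ _ hu0 hv0 hneq
    -- one of u, v is in intBdry, the other in extBdry
    have key : (u.1 ∈ intBdry G W ∧ v.1 ∈ extBdry G W) ∨
        (u.1 ∈ extBdry G W ∧ v.1 ∈ intBdry G W) := by
      rcases u.2 with hu | hu <;> rcases v.2 with hv | hv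
      · exact absurd (hbip _ _ hAdj) (by
          rintro (⟨h1, _⟩ | ⟨_, h2⟩)
          · exact hdisj.ne_of_mem h1 (hint hu) rfl
          · exact hdisj.ne_of_mem h2 (hint hv) rfl)
      · exact Or.inl ⟨hu, hv⟩
      · exact Or.inr ⟨hu, hv⟩
      · exact absurd (hbip _ _ hAdj) (by
          rintro (⟨_, h2⟩ | ⟨h1, _⟩)
          · exact hdisj.ne_of_mem (hext hv) h2 rfl
          · exact hdisj.ne_of_mem (hext hu) h1 rfl)
    rcases key with ⟨hu, hv⟩ | ⟨hu, hv⟩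
    · have hv' : v.1 ∉ intBdry G W := fun h => hdisj' _ h hv
      simp only [g, if_pos hu, if_neg hv', hswap]
    · have hu' : u.1 ∉ intBdry G W := fun h => hdisj' _ h hu
      simp only [g, if_neg hu', if_pos hv, hswap, neg_neg]
  have hwalk : ∀ {u v : S}, (G.induce S).Walk u v → g u = g v := by
    intro u v p
    induction p with
    | nil => rfl
    | cons h _ ih => exact (hadj _ _ h).trans ih
  intro c
  obtain ⟨v0, hv0⟩ := c.exists_rep
  refine ⟨g v0, -g v0, ?_, ?_⟩
  · have hg0 : g v0 ≠ 0 := by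
      by_cases h : v0.1 ∈ intBdry G W
      · simpa [g, if_pos h] using hne0 _ v0.2
      · simp only [g, if_neg h]
        intro hc
        exact hne0 _ v0.2 (neg_eq_zero.mp hc)
    rcases fin3_ne_zero_cases _ hg0 with h | h <;> rw [h]
    · have : (-1 : Fin 3) = 2 := by decide
      rw [this]
    · have : (-2 : Fin 3) = 1 := by decide
      rw [this, Set.pair_comm]
  · intro v hv
    have hreach : (G.induce S).Reachable v v0 :=
      SimpleGraph.ConnectedComponent.exact (hv.trans hv0.symm)
    obtain ⟨p⟩ := hreach
    have hgv : g v = g v0 := hwalk p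
    constructor
    · intro h
      rw [← hgv]; simp [g, if_pos h]
    · intro h
      have h' : v.1 ∉ intBdry G W := fun hh => hdisj' _ hh h
      have : -χ v.1 = g v0 := by rw [← hgv]; simp [g, if_neg h']
      rw [← this, neg_neg]
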